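/- arXiv:0907.5584 — 3 statements merged into one kernel-verified Lean document; each statement's English description precedes it below -/
import Mathlib

section
/- Fix an integer d ≥ 2 and t > 0. Then p_t is integrable on ℝ^d and for every ξ ∈ ℝ^d one has ∫_{ℝ^d} e^{−i⟨x,ξ⟩} p_t(x) dx = exp(−t(⟨ξ⟩ − 1)); that is, the Fourier transform of the function p_t equals ξ ↦ e^{−t(√(1+|ξ|²)−1)}. -/
open MeasureTheory
open scoped RealInnerProductSpace

/-- The relativistic heat kernel
`p_t(x) := (2π)^{−d} (t/√(|x|²+t²)) ∫ exp(t − ⟨ξ⟩√(|x|²+t²)) dξ`. -/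
noncomputable def relKernel (d : ℕ) (t : ℝ) (x : EuclideanSpace ℝ (Fin d)) : ℝ :=
  ((2 * Real.pi) ^ d)⁻¹ * (t / Real.sqrt (‖x‖ ^ 2 + t ^ 2)) *
    ∫ ξ : EuclideanSpace ℝ (Fin d),
      Real.exp (t - Real.sqrt (1 + ‖ξ‖ ^ 2) * Real.sqrt (‖x‖ ^ 2 + t ^ 2))

open Real Set

lemma odd_part_zero (c : ℝ) : ∫ v : ℝ, v / (2 * Real.sqrt (v^2 + 4*c)) * Real.exp (-v^2) = 0 := by
  set B : ℝ → ℝ := fun v => v / (2 * Real.sqrt (v^2 + 4*c)) * Real.exp (-v^2) with hB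
  have hodd : ∀ v, B (-v) = - B v := by
    intro v
    simp only [hB, neg_sq, neg_div, neg_mul]
  have h1 : ∫ v : ℝ, B (-v) = ∫ v : ℝ, B v := integral_neg_eq_self B volume
  simp_rw [hodd, integral_neg] at h1
  linarith

lemma glasser (c : ℝ) (hc : 0 < c) :
    ∫ u in Ioi (0:ℝ), Real.exp (-u^2 - c^2/u^2) = Real.sqrt π / 2 * Real.exp (-(2*c)) := by
  set w : ℝ → ℝ := fun v => Real.sqrt (v^2 + 4*c) with hw
  have hpos : ∀ v : ℝ, 0 < v^2 + 4*c := fun v => by positivity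
  have hwpos : ∀ v, 0 < w v := fun v => Real.sqrt_pos.2 (hpos v)
  have hwsq : ∀ v, w v ^ 2 = v^2 + 4*c := fun v => Real.sq_sqrt (hpos v).le
  have hvlt : ∀ v : ℝ, |v| < w v := by
    intro v
    have h : |v| = Real.sqrt (v^2) := (Real.sqrt_sq_eq_abs v).symm
    rw [h, hw]
    exact Real.sqrt_lt_sqrt (sq_nonneg v) (by linarith)
  set ψ : ℝ → ℝ := fun v => (v + w v)/2 with hψ
  have hψpos : ∀ v, 0 < ψ v := by
    intro v
    have h := (abs_lt.1 (hvlt v)).1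
    simp only [hψ]; linarith
  have hψv : ∀ v, ψ v ^ 2 - v * ψ v = c := by
    intro v
    have h := hwsq v
    simp only [hψ]; nlinarith
  have hderiv : ∀ v : ℝ, HasDerivAt ψ ((1 + v / w v)/2) v := by
    intro v
    have h1 : HasDerivAt (fun v : ℝ => v^2 + 4*c) (2*v) v := by
      simpa using ((hasDerivAt_pow 2 v).add_const (4*c))
    have h2 : HasDerivAt w (1/(2 * w v) * (2*v)) v :=
      (Real.hasDerivAt_sqrt (hpos v).ne').comp v h1
    have h3 : HasDerivAt ψ ((1 + 1/(2 * w v) * (2*v))/2) v :=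
      ((hasDerivAt_id v).add h2).div_const 2
    convert h3 using 1
    field_simp
  have himg : ψ '' univ = Ioi 0 := by
    apply Subset.antisymm
    · rintro x ⟨v, -, rfl⟩; exact hψpos v
    · intro u hu
      have hu' : (0:ℝ) < u := hu
      refine ⟨u - c/u, mem_univ _, ?_⟩
      have hwu : w (u - c/u) = u + c/u := by
        have h1 : (u - c/u)^2 + 4*c = (u + c/u)^2 := by field_simp; ring
        simp only [hw]
        rw [h1]
        exact Real.sqrt_sq (by positivity)
      simp only [hψ, hwu]; ring
  have hinj : InjOn ψ univ := by
    intro a _ b _ hab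
    have ha := hψv a; have hb := hψv b
    rw [hab] at ha
    have h : a * ψ b = b * ψ b := by linarith
    exact mul_right_cancel₀ (hψpos b).ne' h
  have key := integral_image_eq_integral_abs_deriv_smul MeasurableSet.univ
      (fun x _ => (hderiv x).hasDerivWithinAt) hinj
      (fun u => Real.exp (-u^2 - c^2/u^2))
  rw [himg, Measure.restrict_univ] at key
  rw [key]
  have hpt : ∀ v : ℝ, |(1 + v / w v)/2| • Real.exp (-(ψ v)^2 - c^2/(ψ v)^2)
      = Real.exp (-(2*c)) * ((1/2) * Real.exp (-v^2)
        + v / (2 * Real.sqrt (v^2 + 4*c)) * Real.exp (-v^2)) := by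
    intro v
    have hψp := hψpos v
    have hcψ : c / ψ v = ψ v - v := by
      rw [div_eq_iff hψp.ne']
      nlinarith [hψv v]
    have hc2 : c^2/(ψ v)^2 = (ψ v - v)^2 := by
      rw [← hcψ]
      exact (div_pow c (ψ v) 2).symm
    have e1 : -(ψ v)^2 - c^2/(ψ v)^2 = -(2*c) + (-v^2) := by
      rw [hc2]; nlinarith [hψv v]
    have hnn : 0 ≤ (1 + v / w v)/2 := by
      have h : -1 < v / w v := by
        rw [lt_div_iff₀ (hwpos v)]
        have := (abs_lt.1 (hvlt v)).1
        linarith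
      linarith
    rw [smul_eq_mul, abs_of_nonneg hnn, e1, Real.exp_add]
    simp only [hw]
    ring
  simp_rw [hpt]
  have hexp : Integrable (fun v:ℝ => Real.exp (-v^2)) := by
    simpa using integrable_exp_neg_mul_sq one_pos
  have hA : Integrable (fun v:ℝ => (1/2) * Real.exp (-v^2)) := hexp.const_mul _
  have hB : Integrable (fun v:ℝ => v / (2 * Real.sqrt (v^2 + 4*c)) * Real.exp (-v^2)) := by
    apply hexp.mono
    · apply Continuous.aestronglyMeasurable
      apply Continuous.mul ?_ (Real.continuous_exp.comp (by continuity))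
      apply Continuous.div continuous_id (by continuity)
      intro v
      have h5 := hwpos v
      simp only [hw] at h5
      have h4 : (0:ℝ) < 2 * Real.sqrt (v^2 + 4*c) := by linarith
      exact h4.ne'
    · refine Filter.Eventually.of_forall (fun v => ?_)
      have hwv := hwpos v
      simp only [hw] at hwv
      rw [Real.norm_eq_abs, Real.norm_eq_abs, abs_mul, Real.abs_exp, abs_div]
      have h2w : |2 * Real.sqrt (v^2 + 4*c)| = 2 * Real.sqrt (v^2 + 4*c) :=
        abs_of_pos (by linarith)
      have hvw := hvlt v
      simp only [hw] at hvw
      have h1 : |v| / |2 * Real.sqrt (v^2 + 4*c)| ≤ 1 := by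
        rw [h2w, div_le_one (by linarith)]
        linarith
      calc |v| / |2 * Real.sqrt (v^2 + 4*c)| * Real.exp (-v^2)
          ≤ 1 * Real.exp (-v^2) :=
            mul_le_mul_of_nonneg_right h1 (Real.exp_nonneg _)
        _ = Real.exp (-v^2) := one_mul _
  rw [integral_const_mul, integral_add hA hB, integral_const_mul, odd_part_zero]
  have hg : ∫ v:ℝ, Real.exp (-v^2) = Real.sqrt π := by
    simpa using integral_gaussian 1
  rw [hg]
  ring

lemma phi_image {β : ℝ} (hβ : 0 < β) : (fun u : ℝ => β/u^2) '' (Ioi 0) = Ioi 0 := by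
  apply Subset.antisymm
  · rintro x ⟨u, hu, rfl⟩
    exact div_pos hβ (pow_pos hu 2)
  · intro s hs
    have hs' : (0:ℝ) < s := hs
    refine ⟨Real.sqrt (β/s), Real.sqrt_pos.2 (div_pos hβ hs'), ?_⟩
    simp only
    rw [Real.sq_sqrt (div_pos hβ hs').le]
    field_simp

lemma phi_injOn {β : ℝ} (hβ : 0 < β) : InjOn (fun u : ℝ => β/u^2) (Ioi 0) := by
  intro a ha b hb h
  simp only at h
  have ha' : (0:ℝ) < a := ha
  have hb' : (0:ℝ) < b := hb
  field_simp at h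
  exact (pow_left_inj₀ ha'.le hb'.le two_ne_zero).1 h.symm

lemma phi_hasDeriv (β : ℝ) {u : ℝ} (hu : 0 < u) :
    HasDerivAt (fun u : ℝ => β/u^2) (-(2*β/u^3)) u := by
  have h := (hasDerivAt_const u β).div (hasDerivAt_pow 2 u) (by positivity)
  exact h.congr_deriv (by have hu0 : u ≠ 0 := hu.ne'; norm_num; field_simp)

lemma subst_eq {β : ℝ} (hβ : 0 < β) (G : ℝ → ℝ) :
    ∫ s in Ioi (0:ℝ), G s = ∫ u in Ioi (0:ℝ), (2*β/u^3) * G (β/u^2) := by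
  have key := integral_image_eq_integral_abs_deriv_smul measurableSet_Ioi
    (fun u hu => (phi_hasDeriv β (mem_Ioi.1 hu)).hasDerivWithinAt) (phi_injOn hβ) G
  rw [phi_image hβ] at key
  rw [key]
  apply setIntegral_congr_fun measurableSet_Ioi
  intro u hu
  have hu' : (0:ℝ) < u := hu
  simp only [smul_eq_mul, abs_neg]
  rw [abs_of_nonneg (by positivity)]

lemma subst_int {β : ℝ} (hβ : 0 < β) (G : ℝ → ℝ) :
    IntegrableOn G (Ioi 0) ↔ IntegrableOn (fun u => (2*β/u^3) * G (β/u^2)) (Ioi 0) := by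
  have key := integrableOn_image_iff_integrableOn_abs_deriv_smul measurableSet_Ioi
    (fun u hu => (phi_hasDeriv β (mem_Ioi.1 hu)).hasDerivWithinAt) (phi_injOn hβ) G
  rw [phi_image hβ] at key
  rw [key]
  apply integrableOn_congr_fun _ measurableSet_Ioi
  intro u hu
  have hu' : (0:ℝ) < u := hu
  simp only [smul_eq_mul, abs_neg]
  rw [abs_of_nonneg (by positivity)]

/-- the integrand of the subordination formula -/
noncomputable def sI (t a : ℝ) (s : ℝ) : ℝ :=
  t/(2*Real.sqrt π) * (s * Real.sqrt s)⁻¹ * Real.exp (-(t^2/(4*s)) - a^2*s)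

lemma sI_transform {t a : ℝ} (ht : 0 < t) {u : ℝ} (hu : 0 < u) :
    (2*(t^2/4)/u^3) * sI t a (t^2/4/u^2)
      = 2/Real.sqrt π * Real.exp (-u^2 - (a*t/2)^2/u^2) := by
  have hsq : Real.sqrt (t^2/4/u^2) = t/(2*u) := by
    rw [show t^2/4/u^2 = (t/(2*u))^2 by ring]
    exact Real.sqrt_sq (by positivity)
  unfold sI
  rw [hsq]
  have he : -(t^2/(4*(t^2/4/u^2))) - a^2*(t^2/4/u^2) = -u^2 - (a*t/2)^2/u^2 := by
    field_simp
    ring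
  rw [he]
  have hπ : Real.sqrt π ≠ 0 := (Real.sqrt_pos.2 Real.pi_pos).ne'
  field_simp

lemma subord_integral {t a : ℝ} (ht : 0 < t) (ha : 0 < a) :
    ∫ s in Ioi (0:ℝ), sI t a s = Real.exp (-(t*a)) := by
  rw [subst_eq (show (0:ℝ) < t^2/4 by positivity) (sI t a)]
  rw [setIntegral_congr_fun measurableSet_Ioi
    (fun u hu => sI_transform ht (mem_Ioi.1 hu))]
  rw [integral_const_mul, glasser (a*t/2) (by positivity)]
  have hπ : (0:ℝ) < Real.sqrt π := Real.sqrt_pos.2 Real.pi_pos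
  rw [show -(2*(a*t/2)) = -(t*a) by ring]
  field_simp

lemma subord_integrableOn {t a : ℝ} (ht : 0 < t) (ha : 0 < a) :
    IntegrableOn (sI t a) (Ioi 0) := by
  rw [subst_int (show (0:ℝ) < t^2/4 by positivity) (sI t a)]
  rw [integrableOn_congr_fun (fun u hu => sI_transform ht (mem_Ioi.1 hu)) measurableSet_Ioi]
  apply Integrable.const_mul
  have hint : Integrable (fun u : ℝ => Real.exp (-1*u^2)) (volume.restrict (Ioi 0)) :=
    (integrable_exp_neg_mul_sq one_pos).integrableOn
  apply hint.mono
  · apply ContinuousOn.aestronglyMeasurable _ measurableSet_Ioi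
    apply Real.continuous_exp.comp_continuousOn
    apply ContinuousOn.sub
    · exact (continuous_pow 2).continuousOn.neg
    · exact continuousOn_const.div (continuous_pow 2).continuousOn
        (fun u hu => pow_ne_zero 2 (ne_of_gt hu))
  · filter_upwards [ae_restrict_mem measurableSet_Ioi] with u hu
    have hu' : (0:ℝ) < u := hu
    rw [Real.norm_eq_abs, Real.norm_eq_abs, Real.abs_exp, Real.abs_exp, Real.exp_le_exp]
    have : 0 ≤ (a*t/2)^2/u^2 := by positivity
    nlinarith

lemma K_integrableOn (d : ℕ) {r : ℝ} (hr : 0 < r) :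
    IntegrableOn (fun s => (π/s)^((d:ℝ)/2) * sI r 1 s) (Ioi 0) := by
  rw [subst_int (show (0:ℝ) < r^2/4 by positivity)]
  have heq : ∀ u ∈ Ioi (0:ℝ),
      (2*(r^2/4)/u^3) * ((π/(r^2/4/u^2))^((d:ℝ)/2) * sI r 1 (r^2/4/u^2))
      = (4*π/r^2)^((d:ℝ)/2) * (2/Real.sqrt π)
          * (u^(d:ℝ) * Real.exp (-u^2 - (1*r/2)^2/u^2)) := by
    intro u hu
    have hu' : (0:ℝ) < u := hu
    have h1 : π/(r^2/4/u^2) = (4*π/r^2) * u^2 := by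
      field_simp
    have h2 : ((4*π/r^2) * (u^2))^((d:ℝ)/2) = (4*π/r^2)^((d:ℝ)/2) * u^(d:ℝ) := by
      rw [Real.mul_rpow (by positivity) (by positivity)]
      congr 1
      rw [← Real.rpow_natCast u 2, ← Real.rpow_mul hu'.le]
      congr 1
      push_cast
      ring
    calc (2*(r^2/4)/u^3) * ((π/(r^2/4/u^2))^((d:ℝ)/2) * sI r 1 (r^2/4/u^2))
        = (π/(r^2/4/u^2))^((d:ℝ)/2) * ((2*(r^2/4)/u^3) * sI r 1 (r^2/4/u^2)) := by ring
      _ = ((4*π/r^2) * (u^2))^((d:ℝ)/2) * (2/Real.sqrt π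
            * Real.exp (-u^2 - (1*r/2)^2/u^2)) := by
          rw [h1, sI_transform hr hu']
      _ = _ := by rw [h2]; ring
  rw [integrableOn_congr_fun heq measurableSet_Ioi]
  apply Integrable.const_mul
  have hint : Integrable (fun u : ℝ => u^(d:ℝ) * Real.exp (-1*u^2)) (volume.restrict (Ioi 0)) :=
    (integrable_rpow_mul_exp_neg_mul_sq one_pos
      (lt_of_lt_of_le neg_one_lt_zero (Nat.cast_nonneg d))).integrableOn
  apply hint.mono
  · apply ContinuousOn.aestronglyMeasurable _ measurableSet_Ioi
    apply ContinuousOn.mul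
    · exact continuousOn_id.rpow_const (fun u hu => Or.inl (ne_of_gt hu))
    · apply Real.continuous_exp.comp_continuousOn
      apply ContinuousOn.sub
      · exact (continuous_pow 2).continuousOn.neg
      · exact continuousOn_const.div (continuous_pow 2).continuousOn
          (fun u hu => pow_ne_zero 2 (ne_of_gt hu))
  · filter_upwards [ae_restrict_mem measurableSet_Ioi] with u hu
    have hu' : (0:ℝ) < u := hu
    have hrp : (0:ℝ) ≤ u^(d:ℝ) := Real.rpow_nonneg hu'.le _
    rw [Real.norm_eq_abs, Real.norm_eq_abs, abs_mul, abs_mul, Real.abs_exp, Real.abs_exp,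
      abs_of_nonneg hrp]
    apply mul_le_mul_of_nonneg_left _ hrp
    rw [Real.exp_le_exp]
    have : 0 ≤ (1*r/2)^2/u^2 := by positivity
    nlinarith

variable {V : Type*} [NormedAddCommGroup V] [InnerProductSpace ℝ V] [FiniteDimensional ℝ V]
  [MeasurableSpace V] [BorelSpace V]

lemma integrable_rexp_neg_mul_sq_norm {b : ℝ} (hb : 0 < b) :
    Integrable (fun v : V => Real.exp (-b * ‖v‖^2)) := by
  have h := (GaussianFourier.integrable_cexp_neg_mul_sq_norm_add
    (b := (b:ℂ)) (by simpa using hb) 0 (0 : V)).norm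
  refine h.congr (Filter.Eventually.of_forall fun v => ?_)
  simp [Complex.norm_exp, ← Complex.ofReal_pow]

noncomputable def Wfun (d : ℕ) (t : ℝ) (s : ℝ) : ℝ :=
  ((2*π)^d)⁻¹ * Real.exp t * ((π/s)^((d:ℝ)/2) * sI t 1 s)

lemma sI_pos {t a s : ℝ} (ht : 0 < t) (hs : 0 < s) : 0 < sI t a s := by
  unfold sI
  have h1 : 0 < Real.sqrt π := Real.sqrt_pos.2 Real.pi_pos
  have h2 : 0 < Real.sqrt s := Real.sqrt_pos.2 hs
  positivity

section Kernel

variable {d : ℕ} {t : ℝ}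

local notation "E" => EuclideanSpace ℝ (Fin d)

lemma sI_split (r : ℝ) (η : E) (s : ℝ) :
    sI r (Real.sqrt (1+‖η‖^2)) s = sI r 1 s * Real.exp (-(s*‖η‖^2)) := by
  have ha2 : Real.sqrt (1+‖η‖^2)^2 = 1+‖η‖^2 := Real.sq_sqrt (by positivity)
  unfold sI
  rw [mul_assoc (r/(2*Real.sqrt π) * (s*Real.sqrt s)⁻¹), ← Real.exp_add]
  congr 1
  rw [ha2]
  ring

lemma gauss_int_eta {s : ℝ} (hs : 0 < s) :
    ∫ η : E, Real.exp (-(s*‖η‖^2)) = (π/s)^((d:ℝ)/2) := by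
  simp_rw [← neg_mul]
  rw [GaussianFourier.integral_rexp_neg_mul_sq_norm hs, finrank_euclideanSpace_fin]

lemma prod_meas_eq :
    (volume : Measure E).prod ((volume : Measure ℝ).restrict (Ioi 0))
      = ((volume : Measure E).prod (volume : Measure ℝ)).restrict (univ ×ˢ Ioi 0) := by
  rw [← Measure.prod_restrict, Measure.restrict_univ]

lemma hProd1 {r : ℝ} (hr : 0 < r) :
    Integrable (Function.uncurry fun (η : E) (s : ℝ) => sI r 1 s * Real.exp (-(s*‖η‖^2)))
      ((volume : Measure E).prod (volume.restrict (Ioi 0))) := by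
  have hmeas : AEStronglyMeasurable
      (Function.uncurry fun (η : E) (s : ℝ) => sI r 1 s * Real.exp (-(s*‖η‖^2)))
      ((volume : Measure E).prod (volume.restrict (Ioi 0))) := by
    rw [prod_meas_eq]
    apply ContinuousOn.aestronglyMeasurable _ (MeasurableSet.univ.prod measurableSet_Ioi)
    have hs2 : ContinuousOn (fun p : E × ℝ => p.2) (univ ×ˢ Ioi 0) :=
      continuous_snd.continuousOn
    have hsne : ∀ p : E × ℝ, p ∈ univ ×ˢ Ioi 0 → p.2 * Real.sqrt p.2 ≠ 0 := by
      intro p hp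
      have h1 : (0:ℝ) < p.2 := hp.2
      have h2 : 0 < Real.sqrt p.2 := Real.sqrt_pos.2 h1
      positivity
    have hinv : ContinuousOn (fun p : E × ℝ => (p.2 * Real.sqrt p.2)⁻¹) (univ ×ˢ Ioi 0) :=
      (hs2.mul ((Real.continuous_sqrt.comp continuous_snd).continuousOn)).inv₀ hsne
    have hexp1 : ContinuousOn (fun p : E × ℝ => Real.exp (-(r^2/(4*p.2)) - 1^2*p.2))
        (univ ×ˢ Ioi 0) := by
      apply Real.continuous_exp.comp_continuousOn
      apply ContinuousOn.sub
      · apply ContinuousOn.neg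
        apply continuousOn_const.div ((continuous_const.mul continuous_snd).continuousOn)
        intro p hp
        have h1 : (0:ℝ) < p.2 := hp.2
        exact (mul_pos four_pos h1).ne'
      · exact (continuous_const.mul continuous_snd).continuousOn
    have hexp2 : ContinuousOn (fun p : E × ℝ => Real.exp (-(p.2*‖p.1‖^2)))
        (univ ×ˢ Ioi 0) := by
      apply Real.continuous_exp.comp_continuousOn
      apply ContinuousOn.neg
      exact (continuous_snd.mul ((continuous_norm.comp continuous_fst).pow 2)).continuousOn
    exact ((continuousOn_const.mul hinv).mul hexp1).mul hexp2
  rw [integrable_prod_iff' hmeas]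
  constructor
  · filter_upwards [ae_restrict_mem measurableSet_Ioi] with s hs
    have h := (integrable_rexp_neg_mul_sq_norm (V := E) (mem_Ioi.1 hs)).const_mul (sI r 1 s)
    refine h.congr (Filter.Eventually.of_forall fun η => ?_)
    simp only [Function.uncurry_apply_pair, neg_mul]
  · have hK : Integrable (fun s => (π/s)^((d:ℝ)/2) * sI r 1 s)
        (volume.restrict (Ioi 0)) := K_integrableOn d hr
    refine hK.congr ?_
    filter_upwards [ae_restrict_mem measurableSet_Ioi] with s hs
    have hs' : (0:ℝ) < s := hs
    have hpos := sI_pos (a := 1) hr hs'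
    simp only [Function.uncurry_apply_pair]
    rw [show (fun η : E => ‖sI r 1 s * Real.exp (-(s*‖η‖^2))‖)
        = fun η : E => sI r 1 s * Real.exp (-(s*‖η‖^2)) from funext fun η => by
      rw [Real.norm_eq_abs, abs_mul, Real.abs_exp, abs_of_pos hpos]]
    rw [integral_const_mul, gauss_int_eta hs']
    ring

lemma relKernel_eq (ht : 0 < t) (x : E) :
    relKernel d t x = ∫ s in Ioi (0:ℝ), Wfun d t s * Real.exp (-(‖x‖^2/(4*s))) := by
  have hx2 : (0:ℝ) < ‖x‖^2 + t^2 := by positivity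
  set r := Real.sqrt (‖x‖^2 + t^2) with hrdef
  have hr : 0 < r := Real.sqrt_pos.2 hx2
  have hr2 : r^2 = ‖x‖^2 + t^2 := Real.sq_sqrt hx2.le
  have h1 : ∀ η : E, Real.exp (t - Real.sqrt (1+‖η‖^2)*r)
      = Real.exp t * Real.exp (-(r * Real.sqrt (1+‖η‖^2))) := by
    intro η
    rw [← Real.exp_add]
    congr 1
    ring
  have h2 : (∫ η : E, Real.exp (t - Real.sqrt (1+‖η‖^2)*r))
      = Real.exp t * ∫ η : E, ∫ s in Ioi (0:ℝ), sI r 1 s * Real.exp (-(s*‖η‖^2)) := by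
    rw [← integral_const_mul]
    refine integral_congr_ae (Filter.Eventually.of_forall fun η => ?_)
    simp only [h1]
    congr 1
    have ha : 0 < Real.sqrt (1+‖η‖^2) := Real.sqrt_pos.2 (by positivity)
    rw [← subord_integral hr ha]
    exact setIntegral_congr_fun measurableSet_Ioi (fun s _ => sI_split r η s)
  have h3 : (∫ η : E, ∫ s in Ioi (0:ℝ), sI r 1 s * Real.exp (-(s*‖η‖^2)))
      = ∫ s in Ioi (0:ℝ), ∫ η : E, sI r 1 s * Real.exp (-(s*‖η‖^2)) :=
    integral_integral_swap (hProd1 hr)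
  have h4 : (∫ s in Ioi (0:ℝ), ∫ η : E, sI r 1 s * Real.exp (-(s*‖η‖^2)))
      = ∫ s in Ioi (0:ℝ), sI r 1 s * (π/s)^((d:ℝ)/2) := by
    refine setIntegral_congr_fun measurableSet_Ioi (fun s hs => ?_)
    rw [integral_const_mul, gauss_int_eta (mem_Ioi.1 hs)]
  rw [relKernel]
  rw [← hrdef, h2, h3, h4]
  rw [show ((2*π)^d)⁻¹ * (t/r) * (Real.exp t * ∫ s in Ioi (0:ℝ), sI r 1 s * (π/s)^((d:ℝ)/2))
      = ∫ s in Ioi (0:ℝ), ((2*π)^d)⁻¹ * (t/r) * Real.exp t * (sI r 1 s * (π/s)^((d:ℝ)/2)) from by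
    rw [integral_const_mul]
    ring]
  refine setIntegral_congr_fun measurableSet_Ioi (fun s hs => ?_)
  have hs' : (0:ℝ) < s := hs
  unfold Wfun sI
  have hπ : Real.sqrt π ≠ 0 := (Real.sqrt_pos.2 Real.pi_pos).ne'
  have hexp : Real.exp (-(r^2/(4*s)) - 1^2*s)
      = Real.exp (-(t^2/(4*s)) - 1^2*s) * Real.exp (-(‖x‖^2/(4*s))) := by
    rw [← Real.exp_add]
    congr 1
    rw [hr2]
    field_simp
    ring
  rw [hexp]
  field_simp


lemma rpow_cancel (d : ℕ) {s : ℝ} (hs : 0 < s) :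
    (π/s)^((d:ℝ)/2) * (4*π*s)^((d:ℝ)/2) = (2*π)^d := by
  rw [← Real.mul_rpow (by positivity) (by positivity)]
  rw [show π/s * (4*π*s) = (2*π)^2 by field_simp; ring]
  rw [← Real.rpow_natCast (2*π) 2, ← Real.rpow_mul (by positivity)]
  rw [show ((2:ℕ):ℝ) * ((d:ℝ)/2) = (d:ℝ) by push_cast; ring]
  exact Real.rpow_natCast _ d

lemma Wfun_pos (ht : 0 < t) {s : ℝ} (hs : 0 < s) : 0 < Wfun d t s := by
  unfold Wfun
  have h1 : (0:ℝ) < (π/s)^((d:ℝ)/2) := Real.rpow_pos_of_pos (by positivity) _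
  have h2 := sI_pos (a := 1) ht hs
  positivity

lemma gauss_int_x {s : ℝ} (hs : 0 < s) :
    ∫ x : E, Real.exp (-(‖x‖^2/(4*s))) = (4*π*s)^((d:ℝ)/2) := by
  have hb : (0:ℝ) < (4*s)⁻¹ := by positivity
  have h1 : ∀ x : E, Real.exp (-(‖x‖^2/(4*s))) = Real.exp (-(4*s)⁻¹ * ‖x‖^2) := by
    intro x; congr 1; field_simp
  simp_rw [h1]
  rw [GaussianFourier.integral_rexp_neg_mul_sq_norm hb, finrank_euclideanSpace_fin]
  congr 1
  field_simp

lemma hProd2r (ht : 0 < t) :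
    Integrable (Function.uncurry fun (x : E) (s : ℝ) => Wfun d t s * Real.exp (-(‖x‖^2/(4*s))))
      ((volume : Measure E).prod ((volume : Measure ℝ).restrict (Ioi 0))) := by
  have hmeas : AEStronglyMeasurable
      (Function.uncurry fun (x : E) (s : ℝ) => Wfun d t s * Real.exp (-(‖x‖^2/(4*s))))
      ((volume : Measure E).prod ((volume : Measure ℝ).restrict (Ioi 0))) := by
    rw [prod_meas_eq]
    apply ContinuousOn.aestronglyMeasurable _ (MeasurableSet.univ.prod measurableSet_Ioi)
    have hs2 : ContinuousOn (fun p : E × ℝ => p.2) (univ ×ˢ Ioi 0) :=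
      continuous_snd.continuousOn
    have hsne : ∀ p : E × ℝ, p ∈ univ ×ˢ Ioi 0 → p.2 ≠ 0 :=
      fun p hp => ne_of_gt hp.2
    have hrpow : ContinuousOn (fun p : E × ℝ => (π/p.2)^((d:ℝ)/2)) (univ ×ˢ Ioi 0) := by
      apply ContinuousOn.rpow_const (continuousOn_const.div hs2 hsne)
      intro p _
      right
      positivity
    have hsI : ContinuousOn (fun p : E × ℝ => sI t 1 p.2) (univ ×ˢ Ioi 0) := by
      unfold sI
      apply ContinuousOn.mul
      · apply ContinuousOn.mul continuousOn_const
        apply ContinuousOn.inv₀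
          (hs2.mul ((Real.continuous_sqrt.comp continuous_snd).continuousOn))
        intro p hp
        have h1 : (0:ℝ) < p.2 := hp.2
        have h2 : 0 < Real.sqrt p.2 := Real.sqrt_pos.2 h1
        exact mul_ne_zero h1.ne' h2.ne'
      · apply Real.continuous_exp.comp_continuousOn
        apply ContinuousOn.sub
        · apply ContinuousOn.neg
          apply continuousOn_const.div ((continuous_const.mul continuous_snd).continuousOn)
          intro p hp
          have h1 : (0:ℝ) < p.2 := hp.2
          exact (mul_pos four_pos h1).ne'
        · exact (continuous_const.mul continuous_snd).continuousOn
    have hexp : ContinuousOn (fun p : E × ℝ => Real.exp (-(‖p.1‖^2/(4*p.2))))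
        (univ ×ˢ Ioi 0) := by
      apply Real.continuous_exp.comp_continuousOn
      apply ContinuousOn.neg
      apply ContinuousOn.div ((continuous_norm.comp continuous_fst).pow 2).continuousOn
        ((continuous_const.mul continuous_snd).continuousOn)
      intro p hp
      have h1 : (0:ℝ) < p.2 := hp.2
      exact (mul_pos four_pos h1).ne'
    show ContinuousOn (fun p : E × ℝ =>
      ((2*π)^d)⁻¹ * Real.exp t * ((π/p.2)^((d:ℝ)/2) * sI t 1 p.2)
        * Real.exp (-(‖p.1‖^2/(4*p.2)))) (univ ×ˢ Ioi 0)
    exact (continuousOn_const.mul (hrpow.mul hsI)).mul hexp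
  rw [integrable_prod_iff' hmeas]
  constructor
  · filter_upwards [ae_restrict_mem measurableSet_Ioi] with s hs
    have hs' : (0:ℝ) < s := hs
    have h := (integrable_rexp_neg_mul_sq_norm (V := E)
      (show (0:ℝ) < (4*s)⁻¹ by positivity)).const_mul (Wfun d t s)
    refine h.congr (Filter.Eventually.of_forall fun x => ?_)
    simp only [Function.uncurry_apply_pair]
    congr 2
    field_simp
  · have hint : Integrable (fun s => Real.exp t * sI t 1 s) (volume.restrict (Ioi 0)) :=
      (subord_integrableOn ht one_pos).const_mul _
    refine hint.congr ?_
    filter_upwards [ae_restrict_mem measurableSet_Ioi] with s hs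
    have hs' : (0:ℝ) < s := hs
    have hW := Wfun_pos (d := d) ht hs'
    simp only [Function.uncurry_apply_pair]
    rw [show (fun x : E => ‖Wfun d t s * Real.exp (-(‖x‖^2/(4*s)))‖)
        = fun x : E => Wfun d t s * Real.exp (-(‖x‖^2/(4*s))) from funext fun x => by
      rw [Real.norm_eq_abs, abs_mul, Real.abs_exp, abs_of_pos hW]]
    rw [integral_const_mul, gauss_int_x hs']
    unfold Wfun
    have hc := rpow_cancel d hs'
    have hApos : (0:ℝ) < (π/s)^((d:ℝ)/2) := Real.rpow_pos_of_pos (by positivity) _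
    have hBpos : (0:ℝ) < (4*π*s)^((d:ℝ)/2) := Real.rpow_pos_of_pos (by positivity) _
    rw [← hc]
    field_simp

lemma gauss_fourier {s : ℝ} (hs : 0 < s) (ξ : E) :
    ∫ x : E, Complex.exp (-Complex.I * ((⟪x, ξ⟫ : ℝ) : ℂ))
        * ((Real.exp (-(‖x‖^2/(4*s))) : ℝ) : ℂ)
      = (((4*π*s)^((d:ℝ)/2) * Real.exp (-(s*‖ξ‖^2)) : ℝ) : ℂ) := by
  have hb : (0:ℝ) < (4*s)⁻¹ := by positivity
  have hbre : (0:ℝ) < (((4*s)⁻¹ : ℝ) : ℂ).re := by simpa using hb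
  have key := GaussianFourier.integral_cexp_neg_mul_sq_norm_add
    (b := (((4*s)⁻¹ : ℝ) : ℂ)) (V := E) hbre (-Complex.I) ξ
  have hpt : ∀ x : E, Complex.exp (-Complex.I * ((⟪x, ξ⟫ : ℝ) : ℂ))
      * ((Real.exp (-(‖x‖^2/(4*s))) : ℝ) : ℂ)
      = Complex.exp (-(((4*s)⁻¹ : ℝ) : ℂ) * (‖x‖:ℂ)^2 + (-Complex.I) * ((⟪ξ, x⟫ : ℝ) : ℂ)) := by
    intro x
    rw [Complex.ofReal_exp, ← Complex.exp_add]
    congr 1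
    rw [real_inner_comm ξ x]
    push_cast
    have hs0 : (s:ℂ) ≠ 0 := by exact_mod_cast hs.ne'
    field_simp
    ring
  simp_rw [hpt]
  rw [key, finrank_euclideanSpace_fin]
  rw [Complex.ofReal_mul, Complex.ofReal_exp]
  congr 1
  · rw [Complex.ofReal_cpow (by positivity) ((d:ℝ)/2)]
    congr 1
    · push_cast
      have hs0 : (s:ℂ) ≠ 0 := by exact_mod_cast hs.ne'
      field_simp
    · push_cast
      ring
  · congr 1
    have hs0 : (s:ℂ) ≠ 0 := by exact_mod_cast hs.ne'
    rw [show ((-Complex.I)^2 : ℂ) = -1 by simp [Complex.I_sq]]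
    push_cast
    field_simp

lemma hProd2c (ht : 0 < t) (ξ : E) :
    Integrable (Function.uncurry fun (x : E) (s : ℝ) =>
        Complex.exp (-Complex.I * ((⟪x, ξ⟫ : ℝ) : ℂ))
          * ((Wfun d t s * Real.exp (-(‖x‖^2/(4*s))) : ℝ) : ℂ))
      ((volume : Measure E).prod ((volume : Measure ℝ).restrict (Ioi 0))) := by
  apply Integrable.bdd_mul (c := 1) ((hProd2r ht).ofReal (𝕜 := ℂ))
  · apply Continuous.aestronglyMeasurable
    apply Complex.continuous_exp.comp
    apply Continuous.mul continuous_const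
    apply Complex.continuous_ofReal.comp
    exact (continuous_fst.inner continuous_const : Continuous fun p : E × ℝ => ⟪p.1, ξ⟫)
  · refine Filter.Eventually.of_forall (fun p => ?_)
    rw [Complex.norm_exp]
    simp

theorem relKernel_fourierTransform' (hd : 2 ≤ d) (ht : 0 < t) :
    Integrable (relKernel d t) (volume : Measure E) ∧
    ∀ ξ : E,
      (∫ x : E, Complex.exp (-Complex.I * ((⟪x, ξ⟫ : ℝ) : ℂ)) * ((relKernel d t x : ℝ) : ℂ)) =
        ((Real.exp (-t * (Real.sqrt (1 + ‖ξ‖ ^ 2) - 1)) : ℝ) : ℂ) := by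
  constructor
  · have h := MeasureTheory.Integrable.integral_prod_left
      (f := Function.uncurry fun (x : EuclideanSpace ℝ (Fin d)) (s : ℝ) =>
        Wfun d t s * Real.exp (-(‖x‖^2/(4*s)))) (hProd2r ht)
    refine h.congr (Filter.Eventually.of_forall fun x => ?_)
    exact (relKernel_eq ht x).symm
  · intro ξ
    have step1 : (∫ x : E, Complex.exp (-Complex.I * ((⟪x, ξ⟫ : ℝ) : ℂ))
          * ((relKernel d t x : ℝ) : ℂ))
        = ∫ x : E, ∫ s in Ioi (0:ℝ), Complex.exp (-Complex.I * ((⟪x, ξ⟫ : ℝ) : ℂ))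
          * ((Wfun d t s * Real.exp (-(‖x‖^2/(4*s))) : ℝ) : ℂ) := by
      refine integral_congr_ae (Filter.Eventually.of_forall fun x => ?_)
      beta_reduce
      rw [relKernel_eq ht x,
        show (((∫ s in Ioi (0:ℝ), Wfun d t s * Real.exp (-(‖x‖^2/(4*s)))) : ℝ) : ℂ)
            = ∫ s in Ioi (0:ℝ), ((Wfun d t s * Real.exp (-(‖x‖^2/(4*s))) : ℝ) : ℂ)
          from integral_ofReal.symm,
        ← integral_const_mul]
    have step2 := integral_integral_swap (f := fun (x : EuclideanSpace ℝ (Fin d)) (s : ℝ) =>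
      Complex.exp (-Complex.I * ((⟪x, ξ⟫ : ℝ) : ℂ))
        * ((Wfun d t s * Real.exp (-(‖x‖^2/(4*s))) : ℝ) : ℂ)) (hProd2c ht ξ)
    have step3 : (∫ s in Ioi (0:ℝ), ∫ x : E, Complex.exp (-Complex.I * ((⟪x, ξ⟫ : ℝ) : ℂ))
          * ((Wfun d t s * Real.exp (-(‖x‖^2/(4*s))) : ℝ) : ℂ))
        = ∫ s in Ioi (0:ℝ), ((Wfun d t s * ((4*π*s)^((d:ℝ)/2)
            * Real.exp (-(s*‖ξ‖^2))) : ℝ) : ℂ) := by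
      refine setIntegral_congr_fun measurableSet_Ioi (fun s hs => ?_)
      have hs' : (0:ℝ) < s := hs
      have hpull : ∀ x : E, Complex.exp (-Complex.I * ((⟪x, ξ⟫ : ℝ) : ℂ))
          * ((Wfun d t s * Real.exp (-(‖x‖^2/(4*s))) : ℝ) : ℂ)
          = ((Wfun d t s : ℝ) : ℂ) * (Complex.exp (-Complex.I * ((⟪x, ξ⟫ : ℝ) : ℂ))
            * ((Real.exp (-(‖x‖^2/(4*s))) : ℝ) : ℂ)) := by
        intro x
        push_cast
        ring
      simp_rw [hpull]
      rw [integral_const_mul, gauss_fourier hs' ξ]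
      push_cast
      ring
    rw [step1, step2, step3,
      show (∫ s in Ioi (0:ℝ), ((Wfun d t s * ((4*π*s)^((d:ℝ)/2)
              * Real.exp (-(s*‖ξ‖^2))) : ℝ) : ℂ))
          = (((∫ s in Ioi (0:ℝ), Wfun d t s * ((4*π*s)^((d:ℝ)/2)
              * Real.exp (-(s*‖ξ‖^2)))) : ℝ) : ℂ)
        from integral_ofReal]
    have step4 : (∫ s in Ioi (0:ℝ), Wfun d t s * ((4*π*s)^((d:ℝ)/2)
          * Real.exp (-(s*‖ξ‖^2))))
        = ∫ s in Ioi (0:ℝ), Real.exp t * sI t (Real.sqrt (1+‖ξ‖^2)) s := by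
      refine setIntegral_congr_fun measurableSet_Ioi (fun s hs => ?_)
      have hs' : (0:ℝ) < s := hs
      rw [sI_split t ξ s]
      unfold Wfun
      have hc := rpow_cancel d hs'
      have hApos : (0:ℝ) < (π/s)^((d:ℝ)/2) := Real.rpow_pos_of_pos (by positivity) _
      have hBpos : (0:ℝ) < (4*π*s)^((d:ℝ)/2) := Real.rpow_pos_of_pos (by positivity) _
      rw [← hc]
      field_simp
    rw [step4, integral_const_mul,
      subord_integral ht (Real.sqrt_pos.2 (by positivity : (0:ℝ) < 1+‖ξ‖^2)),
      ← Real.exp_add]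
    congr 2
    ring

end Kernel


theorem relKernel_fourierTransform {d : ℕ} (hd : 2 ≤ d) (t : ℝ) (ht : 0 < t) :
    Integrable (relKernel d t) (volume : Measure (EuclideanSpace ℝ (Fin d))) ∧
    ∀ ξ : EuclideanSpace ℝ (Fin d),
      (∫ x : EuclideanSpace ℝ (Fin d),
          Complex.exp (-Complex.I * ((⟪x, ξ⟫ : ℝ) : ℂ)) * ((relKernel d t x : ℝ) : ℂ)) =
        ((Real.exp (-t * (Real.sqrt (1 + ‖ξ‖ ^ 2) - 1)) : ℝ) : ℂ) := by
  exact relKernel_fourierTransform' hd ht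
end

section
/- Fix an integer d ≥ 2. There exists a constant C > 0, depending only on d, such that for all t > 0 and all x ∈ ℝ^d, p_t(x) ≤ C · t · e^t · [ (|x|²+t²)^{−(d+1)/2} + (|x|²+t²)^{−(d+2)/4} ] · exp(−(|x|²+t²)^{1/2}). -/
open MeasureTheory

open Real

lemma my_sqrt_le1 {s : ℝ} (h0 : 0 ≤ s) (h : s ≤ 1) :
    1 + s ^ 2 / 4 ≤ Real.sqrt (1 + s ^ 2) := by
  rw [Real.le_sqrt (by positivity) (by positivity)]
  have h2 : s^2 ≤ 1 := by nlinarith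
  nlinarith [h2, sq_nonneg s]

lemma my_sqrt_ge1 {s : ℝ} (h : 1 ≤ s) :
    1 + s / 4 ≤ Real.sqrt (1 + s ^ 2) := by
  rw [Real.le_sqrt (by nlinarith) (by positivity)]
  nlinarith

lemma my_exp_norm_integrable (d : ℕ) :
    Integrable (fun ξ : EuclideanSpace ℝ (Fin d) => Real.exp (-‖ξ‖)) := by
  have hfin : (Module.finrank ℝ (EuclideanSpace ℝ (Fin d)) : ℝ) < (d + 1 : ℝ) := by
    simp [finrank_euclideanSpace_fin]
  have hInt := (integrable_one_add_norm (E := EuclideanSpace ℝ (Fin d)) (r := (d+1:ℝ)) (μ := volume) hfin).const_mul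
    ((d+1).factorial * Real.exp 1)
  refine hInt.mono' ?_ ?_
  · exact (Real.continuous_exp.comp continuous_norm.neg).aestronglyMeasurable
  · filter_upwards with ξ
    have h1 : (0:ℝ) < 1 + ‖ξ‖ := by positivity
    rw [Real.norm_eq_abs, abs_of_pos (Real.exp_pos _)]
    have hp : (1 + ‖ξ‖) ^ ((d:ℝ)+1) = (1 + ‖ξ‖) ^ (d+1) := by
      rw [show ((d:ℝ)+1) = ((d+1 : ℕ) : ℝ) by push_cast; ring, Real.rpow_natCast]
    rw [show (-((d:ℝ)+1)) = -(((d:ℝ))+1) by ring, Real.rpow_neg h1.le, hp]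
    rw [le_mul_inv_iff₀ (by positivity)]
    have := Real.pow_div_factorial_le_exp (x := 1 + ‖ξ‖) (by positivity) (d+1)
    have h2 : (1 + ‖ξ‖) ^ (d+1) ≤ (d+1).factorial * Real.exp (1 + ‖ξ‖) := by
      rw [div_le_iff₀ (by positivity : (0:ℝ) < (d+1).factorial)] at this
      linarith [this]
    calc Real.exp (-‖ξ‖) * (1 + ‖ξ‖) ^ (d+1)
        ≤ Real.exp (-‖ξ‖) * ((d+1).factorial * Real.exp (1 + ‖ξ‖)) := by
          exact mul_le_mul_of_nonneg_left h2 (Real.exp_pos _).le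
      _ = (d+1).factorial * Real.exp 1 := by
          rw [show Real.exp 1 = Real.exp (-‖ξ‖) * Real.exp (1+‖ξ‖) by
            rw [← Real.exp_add]; norm_num]
          ring

lemma my_gauss_integrable (d : ℕ) {b : ℝ} (hb : 0 < b) :
    Integrable (fun ξ : EuclideanSpace ℝ (Fin d) => Real.exp (-b * ‖ξ‖ ^ 2)) := by
  have h := GaussianFourier.integrable_cexp_neg_mul_sq_norm_add (V := EuclideanSpace ℝ (Fin d))
    (b := (b : ℂ)) (by simpa using hb) 0 (0 : EuclideanSpace ℝ (Fin d))
  have h2 := h.norm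
  simp only [zero_mul, add_zero] at h2
  convert h2 using 2 with ξ
  rw [Complex.norm_exp]
  congr 1
  rw [show (-(b:ℂ)) * (‖ξ‖:ℂ) ^ 2 = ((-b * ‖ξ‖ ^ 2 : ℝ) : ℂ) by push_cast; ring,
    Complex.ofReal_re]

lemma my_pointwise {d : ℕ} (t r : ℝ) (hr : 0 < r) (ξ : EuclideanSpace ℝ (Fin d)) :
    Real.exp (t - Real.sqrt (1 + ‖ξ‖ ^ 2) * r) ≤
      Real.exp t * Real.exp (-r) *
        (Real.exp (-(r/4) * ‖ξ‖ ^ 2) + Real.exp (-(r/4) * ‖ξ‖)) := by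
  rcases le_total ‖ξ‖ 1 with h | h
  · have h1 := my_sqrt_le1 (norm_nonneg ξ) h
    have h2 : t - Real.sqrt (1 + ‖ξ‖ ^ 2) * r ≤ t + -r + (-(r/4) * ‖ξ‖ ^ 2) := by
      nlinarith [mul_le_mul_of_nonneg_right h1 hr.le]
    calc Real.exp (t - Real.sqrt (1 + ‖ξ‖ ^ 2) * r)
        ≤ Real.exp (t + -r + (-(r/4) * ‖ξ‖ ^ 2)) := Real.exp_le_exp.2 h2
      _ = Real.exp t * Real.exp (-r) * Real.exp (-(r/4) * ‖ξ‖ ^ 2) := by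
          rw [Real.exp_add, Real.exp_add]
      _ ≤ _ := by
          refine mul_le_mul_of_nonneg_left ?_ (by positivity)
          exact le_add_of_nonneg_right (Real.exp_pos _).le
  · have h1 := my_sqrt_ge1 h
    have h2 : t - Real.sqrt (1 + ‖ξ‖ ^ 2) * r ≤ t + -r + (-(r/4) * ‖ξ‖) := by
      nlinarith [mul_le_mul_of_nonneg_right h1 hr.le]
    calc Real.exp (t - Real.sqrt (1 + ‖ξ‖ ^ 2) * r)
        ≤ Real.exp (t + -r + (-(r/4) * ‖ξ‖)) := Real.exp_le_exp.2 h2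
      _ = Real.exp t * Real.exp (-r) * Real.exp (-(r/4) * ‖ξ‖) := by
          rw [Real.exp_add, Real.exp_add]
      _ ≤ _ := by
          refine mul_le_mul_of_nonneg_left ?_ (by positivity)
          exact le_add_of_nonneg_left (Real.exp_pos _).le

lemma my_integral_bound (d : ℕ) (t r : ℝ) (hr : 0 < r) :
    (∫ ξ : EuclideanSpace ℝ (Fin d), Real.exp (t - Real.sqrt (1 + ‖ξ‖ ^ 2) * r)) ≤
      Real.exp t * Real.exp (-r) *
        ((Real.pi / (r/4)) ^ ((d:ℝ)/2) +
          ((r/4) ^ d)⁻¹ * ∫ ξ : EuclideanSpace ℝ (Fin d), Real.exp (-‖ξ‖)) := by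
  have hb : 0 < r/4 := by positivity
  have hI1 := my_gauss_integrable d hb
  have hI2 : Integrable (fun ξ : EuclideanSpace ℝ (Fin d) => Real.exp (-(r/4) * ‖ξ‖)) := by
    have h := (my_exp_norm_integrable d).comp_smul (R := r/4) (ne_of_gt hb)
    refine h.congr ?_
    filter_upwards with ξ
    simp [norm_smul, abs_of_pos hb, abs_of_pos hr, neg_mul]
  have hGauss : (∫ ξ : EuclideanSpace ℝ (Fin d), Real.exp (-(r/4) * ‖ξ‖ ^ 2)) =
      (Real.pi / (r/4)) ^ ((d:ℝ)/2) := by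
    have h := GaussianFourier.integral_rexp_neg_mul_sq_norm
      (V := EuclideanSpace ℝ (Fin d)) hb
    rwa [finrank_euclideanSpace_fin] at h
  have hExp : (∫ ξ : EuclideanSpace ℝ (Fin d), Real.exp (-(r/4) * ‖ξ‖)) =
      ((r/4) ^ d)⁻¹ * ∫ ξ : EuclideanSpace ℝ (Fin d), Real.exp (-‖ξ‖) := by
    have h := Measure.integral_comp_smul_of_nonneg (μ := volume)
      (fun y : EuclideanSpace ℝ (Fin d) => Real.exp (-‖y‖)) (r/4) (hR := hb.le)
    simp only [norm_smul, Real.norm_eq_abs, abs_of_pos hb, neg_mul,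
      finrank_euclideanSpace_fin, smul_eq_mul] at h
    simpa [neg_mul] using h
  calc (∫ ξ : EuclideanSpace ℝ (Fin d), Real.exp (t - Real.sqrt (1 + ‖ξ‖ ^ 2) * r))
      ≤ ∫ ξ : EuclideanSpace ℝ (Fin d), Real.exp t * Real.exp (-r) *
          (Real.exp (-(r/4) * ‖ξ‖ ^ 2) + Real.exp (-(r/4) * ‖ξ‖)) :=
        integral_mono_of_nonneg (Filter.Eventually.of_forall fun ξ => (Real.exp_pos _).le)
          ((hI1.add hI2).const_mul _)
          (Filter.Eventually.of_forall fun ξ => my_pointwise t r hr ξ)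
    _ = Real.exp t * Real.exp (-r) *
          ((∫ ξ : EuclideanSpace ℝ (Fin d), Real.exp (-(r/4) * ‖ξ‖ ^ 2)) +
            ∫ ξ : EuclideanSpace ℝ (Fin d), Real.exp (-(r/4) * ‖ξ‖)) := by
        rw [integral_const_mul, integral_add hI1 hI2]
    _ = _ := by rw [hGauss, hExp]

theorem relKernel_pointwise_bound {d : ℕ} (hd : 2 ≤ d) :
    ∃ C : ℝ, 0 < C ∧ ∀ t : ℝ, 0 < t → ∀ x : EuclideanSpace ℝ (Fin d),
      relKernel d t x ≤ C * t * Real.exp t *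
        ((‖x‖ ^ 2 + t ^ 2) ^ (-(((d : ℝ) + 1) / 2)) +
          (‖x‖ ^ 2 + t ^ 2) ^ (-(((d : ℝ) + 2) / 4))) *
        Real.exp (-Real.sqrt (‖x‖ ^ 2 + t ^ 2)) := by
  set cL : ℝ := ∫ ξ : EuclideanSpace ℝ (Fin d), Real.exp (-‖ξ‖) with hcL
  have hcL0 : 0 ≤ cL := integral_nonneg fun _ => (Real.exp_pos _).le
  set K1 : ℝ := ((2 * Real.pi) ^ d)⁻¹ * (4 * Real.pi) ^ ((d:ℝ)/2) with hK1def
  set K2 : ℝ := ((2 * Real.pi) ^ d)⁻¹ * (4 ^ d * cL) with hK2def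
  have hK10 : 0 ≤ K1 := mul_nonneg (by positivity) (Real.rpow_nonneg (by positivity) _)
  have hK20 : 0 ≤ K2 := mul_nonneg (by positivity) (mul_nonneg (by positivity) hcL0)
  refine ⟨K1 + K2 + 1, by linarith, ?_⟩
  intro t ht x
  rw [relKernel]
  set s2 : ℝ := ‖x‖ ^ 2 + t ^ 2 with hs2def
  have hs2 : 0 < s2 := by positivity
  set r : ℝ := Real.sqrt s2 with hrdef
  have hr : 0 < r := Real.sqrt_pos.2 hs2
  have hr2 : r ^ 2 = s2 := Real.sq_sqrt hs2.le
  set A : ℝ := r ^ (-((d:ℝ) + 1)) with hAdef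
  set B : ℝ := r ^ (-(((d:ℝ) + 2)/2)) with hBdef
  have hA0 : 0 ≤ A := Real.rpow_nonneg hr.le _
  have hB0 : 0 ≤ B := Real.rpow_nonneg hr.le _
  have hA : s2 ^ (-(((d:ℝ) + 1)/2)) = A := by
    rw [← hr2, ← Real.rpow_natCast r 2, ← Real.rpow_mul hr.le, hAdef]
    congr 1
    push_cast
    ring
  have hB : s2 ^ (-(((d:ℝ) + 2)/4)) = B := by
    rw [← hr2, ← Real.rpow_natCast r 2, ← Real.rpow_mul hr.le, hBdef]
    congr 1
    push_cast
    ring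
  rw [hA, hB]
  have hIb := my_integral_bound d t r hr
  have hcoef : (0:ℝ) ≤ ((2 * Real.pi) ^ d)⁻¹ * (t / r) := by positivity
  have step1 : ((2 * Real.pi) ^ d)⁻¹ * (t / r) *
      ∫ ξ : EuclideanSpace ℝ (Fin d), Real.exp (t - Real.sqrt (1 + ‖ξ‖ ^ 2) * r) ≤
      ((2 * Real.pi) ^ d)⁻¹ * (t / r) * (Real.exp t * Real.exp (-r) *
        ((Real.pi / (r/4)) ^ ((d:ℝ)/2) + ((r/4) ^ d)⁻¹ * cL)) :=
    mul_le_mul_of_nonneg_left hIb hcoef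
  have key : ((2 * Real.pi) ^ d)⁻¹ * (t / r) * (Real.exp t * Real.exp (-r) *
        ((Real.pi / (r/4)) ^ ((d:ℝ)/2) + ((r/4) ^ d)⁻¹ * cL))
      = t * Real.exp t * Real.exp (-r) * (K1 * B + K2 * A) := by
    have hq1 : (Real.pi / (r/4)) ^ ((d:ℝ)/2)
        = (4 * Real.pi) ^ ((d:ℝ)/2) * r ^ (-((d:ℝ)/2)) := by
      rw [show Real.pi / (r/4) = (4 * Real.pi) / r by field_simp]
      rw [Real.div_rpow (by positivity) hr.le, Real.rpow_neg hr.le, div_eq_mul_inv]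
    have hq2 : (((r/4):ℝ) ^ d)⁻¹ = 4 ^ d * r ^ (-(d:ℝ)) := by
      rw [div_pow, inv_div, Real.rpow_neg hr.le, Real.rpow_natCast, div_eq_mul_inv]
    have hq3 : r⁻¹ * r ^ (-((d:ℝ)/2)) = B := by
      rw [← Real.rpow_neg_one r, ← Real.rpow_add hr, hBdef]
      congr 1
      ring
    have hq4 : r⁻¹ * r ^ (-(d:ℝ)) = A := by
      rw [← Real.rpow_neg_one r, ← Real.rpow_add hr, hAdef]
      congr 1
      ring
    rw [hq1, hq2, ← hq3, ← hq4, hK1def, hK2def]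
    ring
  have hsum : K1 * B + K2 * A ≤ (K1 + K2 + 1) * (A + B) := by
    nlinarith [mul_le_mul_of_nonneg_right (show K1 ≤ K1 + K2 + 1 by linarith) hB0,
      mul_le_mul_of_nonneg_right (show K2 ≤ K1 + K2 + 1 by linarith) hA0,
      mul_nonneg hA0 hB0]
  calc ((2 * Real.pi) ^ d)⁻¹ * (t / r) *
      ∫ ξ : EuclideanSpace ℝ (Fin d), Real.exp (t - Real.sqrt (1 + ‖ξ‖ ^ 2) * r)
      ≤ t * Real.exp t * Real.exp (-r) * (K1 * B + K2 * A) := by rw [← key]; exact step1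
    _ ≤ t * Real.exp t * Real.exp (-r) * ((K1 + K2 + 1) * (A + B)) := by
        exact mul_le_mul_of_nonneg_left hsum (by positivity)
    _ = (K1 + K2 + 1) * t * Real.exp t * (A + B) * Real.exp (-r) := by ring
end

section
/- Let a ∈ ℝ, let m ∈ ℕ, and let f : ℝ → ℝ be continuous with compact support contained in [−a + 1/2, ∞). Then for every ε > 0 there exists a polynomial P with real coefficients such that for all t ≥ −a + 1/2, |(a+t)^m f(t) − P(1/(a+t))| ≤ ε. -/
theorem polynomial_approximation_of_resolvent_function (a : ℝ) (m : ℕ) (f : ℝ → ℝ)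
    (hf : Continuous f) (hsupp : HasCompactSupport f)
    (hss : Function.support f ⊆ Set.Ici (-a + 1 / 2)) :
    ∀ ε > 0, ∃ P : Polynomial ℝ, ∀ t : ℝ, -a + 1 / 2 ≤ t →
      |(a + t) ^ m * f t - P.eval (1 / (a + t))| ≤ ε := by
  intro ε hε
  -- the support is bounded
  obtain ⟨R, hR⟩ := hsupp.isCompact.isBounded.subset_closedBall 0
  set b : ℝ := max (a + R) 1 with hb
  have hb1 : (1:ℝ) ≤ b := le_max_right _ _
  have hbpos : (0:ℝ) < b := lt_of_lt_of_le one_pos hb1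
  -- the transported function
  set G : ℝ → ℝ := fun x => if 0 < x then x⁻¹ ^ m * f (x⁻¹ - a) else 0 with hG
  have hGzero : ∀ y : ℝ, y < 1 / b → G y = 0 := by
    intro y hy
    by_cases hy0 : 0 < y
    · have hyinv : b < y⁻¹ := by
        rw [lt_inv_comm₀ hbpos hy0]
        rwa [one_div] at hy
      have hfz : f (y⁻¹ - a) = 0 := by
        by_contra h
        have := hR (subset_tsupport f (by simpa [Function.mem_support] using h))
        rw [Metric.mem_closedBall, Real.dist_eq, sub_zero] at this
        have h1 : y⁻¹ - a ≤ R := (abs_le.mp this).2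
        have h2 : a + R < y⁻¹ := lt_of_le_of_lt (le_max_left _ _) hyinv
        linarith
      simp [hG, hy0, hfz]
    · simp [hG, hy0]
  have hGcont : ContinuousOn G (Set.Icc 0 2) := by
    intro x hx
    apply ContinuousAt.continuousWithinAt
    rcases lt_or_ge x (1 / b) with hxs | hxl
    · have : G =ᶠ[nhds x] fun _ => (0:ℝ) := by
        filter_upwards [eventually_lt_nhds hxs] with y hy using hGzero y hy
      exact continuousAt_const.congr this.symm
    · have hx0 : 0 < x := lt_of_lt_of_le (by positivity) hxl
      have hcf : ContinuousAt (fun x : ℝ => x⁻¹ ^ m * f (x⁻¹ - a)) x := by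
        have hinv : ContinuousAt (fun x : ℝ => x⁻¹) x := continuousAt_inv₀ (ne_of_gt hx0)
        exact (hinv.pow m).mul ((hf.continuousAt).comp (hinv.sub continuousAt_const))
      apply hcf.congr
      filter_upwards [eventually_gt_nhds hx0] with y hy
      simp [hG, hy]
  obtain ⟨P, hP⟩ := exists_polynomial_near_of_continuousOn 0 2 G hGcont ε hε
  refine ⟨P, fun t ht => ?_⟩
  have hat : (0:ℝ) < a + t := by linarith
  have hmem : 1 / (a + t) ∈ Set.Icc (0:ℝ) 2 := by
    constructor
    · positivity
    · rw [div_le_iff₀ hat]; linarith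
  have hinv : (1 / (a + t))⁻¹ = a + t := by
    rw [one_div, inv_inv]
  have hGval : G (1 / (a + t)) = (a + t) ^ m * f t := by
    have hpos : 0 < 1 / (a + t) := by positivity
    simp only [hG, hpos, if_pos, hinv]
    ring_nf
  have := hP (1 / (a + t)) hmem
  rw [hGval] at this
  rw [abs_sub_comm] at this
  exact le_of_lt this
end
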